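/- For σ > 0, the two constants c₀ = ∑_{x∈ℤ} exp(-x²/(2·(√2σ)²)) and c_{1/2} = ∑_{x∈ℤ} exp(-(x+1/2)²/(2·(√2σ)²)) satisfy c₀ > c_{1/2}; that is, the discrete Gaussian theta sum centered at a half-integer is strictly smaller than at an integer. -/

import Mathlib

/-!
By Poisson summation, the Gaussian theta sum shifted by `t` equals
`√(π c) * ∑ₙ exp (-π² c n²) cos (2π n t)`. All Fourier coefficients are positive, so the sum is
largest at `t = 0`, and strictly smaller whenever `t ∉ ℤ` because then already the `n = 1` term
has `cos (2π t) < 1`.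
-/

open Real
open Complex (I)

lemma Real.summable_exp_neg_mul_int_sq {a : ℝ} (ha : 0 < a) :
    Summable fun n : ℤ ↦ exp (-a * n ^ 2) := by
  refine (summable_pow_mul_jacobiTheta₂_term_bound 0 (div_pos ha pi_pos) 0).congr fun n ↦ ?_
  rw [pow_zero, one_mul]
  congr 1
  field_simp
  ring

lemma Real.tsum_exp_neg_int_add_sq_div_eq {c : ℝ} (hc : 0 < c) (t : ℝ) :
    ∑' n : ℤ, exp (-((n : ℝ) + t) ^ 2 / c) =
      √(π * c) * ∑' n : ℤ, exp (-(π ^ 2 * c) * n ^ 2) * cos (2 * π * n * t) := by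
  have hπc : 0 < π * c := by positivity
  have hpoisson :=
    Complex.tsum_exp_neg_quadratic (a := (π * c : ℝ)) (by simpa using hπc) (-I * t)
  have hlhs : ∀ n : ℤ, Complex.exp (-π * (π * c : ℝ) * n ^ 2 + 2 * π * (-I * t) * n) =
      exp (-(π ^ 2 * c) * n ^ 2) * Complex.exp ((-(2 * π * n * t) : ℝ) * I) := by
    intro n
    rw [Complex.ofReal_exp, ← Complex.exp_add]
    push_cast
    ring_nf
  have hrhs : ∀ n : ℤ, Complex.exp (-π / (π * c : ℝ) * (n + I * (-I * t)) ^ 2) =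
      exp (-((n : ℝ) + t) ^ 2 / c) := by
    intro n
    rw [Complex.ofReal_exp]
    congr 1
    rw [show I * (-I * t) = t by rw [← mul_assoc, mul_neg, Complex.I_mul_I]; ring]
    push_cast
    field_simp
  simp_rw [hlhs, hrhs] at hpoisson
  have hsum : Summable fun n : ℤ ↦
      (exp (-(π ^ 2 * c) * n ^ 2) : ℂ) * Complex.exp ((-(2 * π * n * t) : ℝ) * I) := by
    refine Summable.of_norm <|
      (summable_exp_neg_mul_int_sq (a := π ^ 2 * c) (by positivity)).congr fun n ↦ ?_
    rw [norm_mul, Complex.norm_exp_ofReal_mul_I, mul_one, Complex.norm_real,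
      norm_of_nonneg (exp_pos _).le]
  have hroot : ((π * c : ℝ) : ℂ) ^ (1 / 2 : ℂ) = (√(π * c) : ℝ) := by
    rw [sqrt_eq_rpow, Complex.ofReal_cpow hπc.le]
    norm_num
  rw [← Complex.ofReal_tsum, hroot, ← Complex.ofReal_one, ← Complex.ofReal_div,
    ← Complex.ofReal_mul] at hpoisson
  have hre := congrArg Complex.re hpoisson
  rw [Complex.re_tsum hsum, Complex.ofReal_re] at hre
  simp only [Complex.re_ofReal_mul, Complex.exp_ofReal_mul_I_re, cos_neg] at hre
  rw [hre]
  field_simp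

lemma Real.tsum_exp_neg_int_add_sq_div_lt {c t : ℝ} (hc : 0 < c) (ht : ∀ n : ℤ, (n : ℝ) ≠ t) :
    ∑' n : ℤ, exp (-((n : ℝ) + t) ^ 2 / c) < ∑' n : ℤ, exp (-(n : ℝ) ^ 2 / c) := by
  have hzero : ∑' n : ℤ, exp (-(n : ℝ) ^ 2 / c) =
      √(π * c) * ∑' n : ℤ, exp (-(π ^ 2 * c) * n ^ 2) := by
    simpa using tsum_exp_neg_int_add_sq_div_eq hc 0
  have hcos : cos (2 * π * t) < 1 := by
    refine (cos_le_one _).lt_of_ne fun h ↦ ?_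
    obtain ⟨n, hn⟩ := (cos_eq_one_iff _).mp h
    exact ht n (by nlinarith [pi_pos])
  have hg := summable_exp_neg_mul_int_sq (a := π ^ 2 * c) (by positivity)
  rw [tsum_exp_neg_int_add_sq_div_eq hc t, hzero]
  refine mul_lt_mul_of_pos_left ?_ (by positivity)
  refine Summable.tsum_lt_tsum (i := 1) (fun n ↦ ?_) ?_ (hg.of_norm_bounded fun n ↦ ?_) hg
  · exact mul_le_of_le_one_right (exp_pos _).le (cos_le_one _)
  · simpa using mul_lt_mul_of_pos_left hcos (exp_pos (-(π ^ 2 * c)))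
  · rw [norm_mul, norm_of_nonneg (exp_pos _).le]
    exact mul_le_of_le_one_right (exp_pos _).le (abs_cos_le_one _)

theorem theta_integer_center_gt_half_integer (σ : ℝ) (hσ : 0 < σ) :
    (∑' x : ℤ, Real.exp (-(x : ℝ)^2 / (4 * σ^2))) >
      ∑' x : ℤ, Real.exp (-((x : ℝ) + 1/2)^2 / (4 * σ^2)) := by
  refine tsum_exp_neg_int_add_sq_div_lt (by positivity) fun n hn ↦ ?_
  have : (2 * n : ℤ) = 1 := by exact_mod_cast (by linarith : (2 * n : ℝ) = 1)
  omega
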